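/- A minimum counterexample G ∈ S_{1,3} to the 2-Decomposition Conjecture contains a cycle all of whose vertices have degree 3 in G. -/

import Mathlib

/-- A loopless multigraph: an edge type `E` with an endpoint map into unordered
pairs of distinct vertices. Parallel edges are allowed. -/
structure Multigraph (V E : Type) where
  ends : E → Sym2 V
  loopless : ∀ e, ¬ (ends e).IsDiag

namespace Multigraph

variable {V E : Type}

/-- Adjacency via an edge belonging to the edge subset `S`. -/
def AdjOn (G : Multigraph V E) (S : Set E) (u v : V) : Prop :=
  ∃ e ∈ S, G.ends e = s(u, v)

/-- Adjacency in `G`. -/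
def Adj (G : Multigraph V E) (u v : V) : Prop := G.AdjOn Set.univ u v

/-- The spanning subgraph with edge set `S` is connected. -/
def ConnOn (G : Multigraph V E) (S : Set E) : Prop :=
  Nonempty V ∧ ∀ u v : V, Relation.ReflTransGen (G.AdjOn S) u v

/-- `G` is connected. -/
def Connected (G : Multigraph V E) : Prop := G.ConnOn Set.univ

/-- The degree of a vertex: the number of edges incident to it. -/
noncomputable def deg (G : Multigraph V E) (v : V) : ℕ :=
  Nat.card {e : E // v ∈ G.ends e}

/-- A cycle in `G`, given as a list of (vertex, edge) pairs: the vertices are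
distinct, the edges are distinct, there are at least two of them (so pairs of
parallel edges count as cycles), and the `i`-th edge joins the `i`-th vertex to
the next one (cyclically). -/
def IsCycle (G : Multigraph V E) (c : List (V × E)) : Prop :=
  (c.map Prod.fst).Nodup ∧ (c.map Prod.snd).Nodup ∧ 2 ≤ c.length ∧
  ∀ i : Fin c.length,
    G.ends (c.get i).2 =
      s((c.get i).1, (c.get ⟨(i + 1) % c.length, Nat.mod_lt _ i.pos⟩).1)

/-- Every cycle of `G` is separating: deleting its edges disconnects `G`. -/
def Separating (G : Multigraph V E) : Prop :=
  ∀ c : List (V × E), G.IsCycle c → ¬ G.ConnOn {e | e ∉ c.map Prod.snd}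

/-- The class `S_{1,3}`: connected, every cycle separating, degrees in `{1,2,3}`. -/
def S13 (G : Multigraph V E) : Prop :=
  G.Connected ∧ (∀ v, 1 ≤ G.deg v ∧ G.deg v ≤ 3) ∧ G.Separating

/-- The edge set `T` is a spanning tree of `G`. -/
def IsTreeSet (G : Multigraph V E) (T : Set E) : Prop :=
  G.ConnOn T ∧ ¬ ∃ c, G.IsCycle c ∧ ∀ p ∈ c, p.2 ∈ T

/-- The edge set `M` is a matching of `G`. -/
def IsMatchingSet (G : Multigraph V E) (M : Set E) : Prop :=
  ∀ e ∈ M, ∀ f ∈ M, e ≠ f → ∀ v : V, ¬ (v ∈ G.ends e ∧ v ∈ G.ends f)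

/-- `G` decomposes into a spanning tree and a matching. -/
def HasTM (G : Multigraph V E) : Prop :=
  ∃ T M : Set E, T ∪ M = Set.univ ∧ Disjoint T M ∧
    G.IsTreeSet T ∧ G.IsMatchingSet M

/-- The parameter `φ(G) = |V(G)| + |E(G)|`. -/
noncomputable def phi (G : Multigraph V E) : ℕ := Nat.card V + Nat.card E

/-- `G` is a minimum counterexample (w.r.t. `φ`) to the statement that every
graph in `S_{1,3}` decomposes into a spanning tree and a matching. -/
def MinCex (G : Multigraph V E) : Prop :=
  G.S13 ∧ ¬ G.HasTM ∧
  ∀ (W F : Type), Finite W → Finite F → ∀ H : Multigraph W F,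
    H.S13 → ¬ H.HasTM → G.phi ≤ H.phi

end Multigraph

/-!
Every connected graph of maximum degree at most 3 in which each cycle passes through a vertex of
degree less than 3 decomposes into a spanning tree and a matching.

By induction on the number of edges we may assume there is no pendant digon (two parallel edges
that are the only edges at one of their ends): otherwise delete one of the two edges, decompose,
and put it back into the matching. Now take `T` minimal among the connected edge sets containing
all edges between vertices of degree 3. It is a tree, since a cycle in `T` has a vertex of degree
less than 3 and one of its edges could be dropped. Each edge `i ∉ T` has an end `w i` of degree 2
that is a leaf of `T`, and exchanging `i` with the tree edge at `w i` can be done for each `i`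
independently. Choosing the far ends `σ i` injectively, which Hall's theorem allows because no
vertex lies on three of the pairs `{x i, y i}`, turns the edges `w i σ i` into a matching.
-/

lemma Finset.exists_injective_of_le_card_of_card_filter_le {ι α : Type*} [Fintype ι]
    [DecidableEq α] (t : ι → Finset α) {k : ℕ} (hk : 0 < k) (ht : ∀ i, k ≤ (t i).card)
    (hmult : ∀ a, (Finset.univ.filter fun i => a ∈ t i).card ≤ k) :
    ∃ f : ι → α, Function.Injective f ∧ ∀ i, f i ∈ t i := by
  refine (Finset.all_card_le_biUnion_card_iff_exists_injective t).mp fun s => ?_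
  refine Nat.le_of_mul_le_mul_right
    (Finset.card_mul_le_card_mul (fun i a => a ∈ t i) (fun i hi => ?_) fun a _ => ?_) hk
  · rw [Finset.bipartiteAbove, Finset.filter_mem_eq_inter,
      Finset.inter_eq_right.mpr (Finset.subset_biUnion_of_mem t hi)]
    exact ht i
  · exact (Finset.card_le_card (Finset.filter_subset_filter _ (Finset.subset_univ s))).trans
      (hmult a)

namespace Multigraph

variable {V E : Type} {G : Multigraph V E}

open Relation

lemma ne_of_ends_eq {e : E} {u v : V} (h : G.ends e = s(u, v)) : u ≠ v := by
  rintro rfl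
  exact G.loopless e (h ▸ Sym2.mk_isDiag_iff.mpr rfl)

instance (S : Set E) : Std.Symm (G.AdjOn S) where
  symm _ _ := fun ⟨e, he, h⟩ => ⟨e, he, h.trans Sym2.eq_swap⟩

lemma reflTransGen_adjOn_symm {S : Set E} {u v : V}
    (h : ReflTransGen (G.AdjOn S) u v) : ReflTransGen (G.AdjOn S) v u :=
  Std.Symm.symm _ _ h

lemma ConnOn.mem_of_isClosed {S : Set E} (hS : G.ConnOn S) {C : Set V}
    (hC : ∀ e ∈ S, ∀ u v, G.ends e = s(u, v) → u ∈ C → v ∈ C) {z : V} (hz : z ∈ C) (u : V) :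
    u ∈ C := by
  induction hS.2 z u with
  | refl => exact hz
  | tail _ hstep ih => obtain ⟨e, he, hends⟩ := hstep; exact hC e he _ _ hends ih

lemma ConnOn.exists_mem_of_ne {S : Set E} (hS : G.ConnOn S) {u v : V} (huv : u ≠ v) :
    ∃ e ∈ S, u ∈ G.ends e := by
  rcases (hS.2 u v).cases_head with rfl | ⟨w, ⟨e, he, hends⟩, -⟩
  · exact absurd rfl huv
  · exact ⟨e, he, hends ▸ Sym2.mem_mk_left u w⟩

lemma ConnOn.eq_or_adjOn_of_leaves {S : Set E} (hS : G.ConnOn S) {z : V}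
    (hleaf : ∀ e ∈ S, ∀ u, G.ends e = s(z, u) → ∀ f ∈ S, u ∈ G.ends f → f = e) (u : V) :
    u = z ∨ G.AdjOn S z u := by
  refine hS.mem_of_isClosed (C := {u | u = z ∨ G.AdjOn S z u}) ?_ (Or.inl rfl) u
  rintro e he a b hab (rfl | ⟨g, hg, hga⟩)
  · exact Or.inr ⟨e, he, hab⟩
  · have heg := hleaf g hg a hga e he (hab ▸ Sym2.mem_mk_left a b)
    subst heg
    rw [hga, Sym2.eq_iff] at hab
    rcases hab with ⟨rfl, rfl⟩ | ⟨hzb, -⟩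
    · exact Or.inl rfl
    · exact Or.inl hzb.symm

lemma ConnOn.eq_or_eq_of_leaf_edge {S : Set E} (hS : G.ConnOn S) {e : E} (he : e ∈ S) {u v : V}
    (huv : G.ends e = s(u, v)) (hu : ∀ f ∈ S, u ∈ G.ends f → f = e)
    (hv : ∀ f ∈ S, v ∈ G.ends f → f = e) (z : V) : z = u ∨ z = v := by
  have hleaf : ∀ g ∈ S, ∀ x, G.ends g = s(u, x) → ∀ f ∈ S, x ∈ G.ends f → f = g := by
    intro g hg x hx f hf hxf
    obtain rfl := hu g hg (hx ▸ Sym2.mem_mk_left u x)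
    rw [huv, Sym2.congr_right] at hx
    exact hv f hf (hx ▸ hxf)
  rcases hS.eq_or_adjOn_of_leaves hleaf z with h | ⟨g, hg, hgz⟩
  · exact Or.inl h
  · rw [hu g hg (hgz ▸ Sym2.mem_mk_left u z), huv, Sym2.congr_right] at hgz
    exact Or.inr hgz.symm

lemma ConnOn.of_retraction {S S' : Set E} (hS : G.ConnOn S) (ρ : V → V)
    (hstep : ∀ e ∈ S, ∀ u v, G.ends e = s(u, v) → ReflTransGen (G.AdjOn S') (ρ u) (ρ v))
    (hret : ∀ u, ∃ u', ReflTransGen (G.AdjOn S') u (ρ u')) : G.ConnOn S' := by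
  have hlift : ∀ u v, ReflTransGen (G.AdjOn S') (ρ u) (ρ v) := fun u v =>
    ReflTransGen.lift' ρ (fun a b ⟨e, he, hends⟩ => hstep e he a b hends) u v (hS.2 u v)
  refine ⟨hS.1, fun u v => ?_⟩
  obtain ⟨u', hu⟩ := hret u
  obtain ⟨v', hv⟩ := hret v
  exact (hu.trans (hlift u' v')).trans (reflTransGen_adjOn_symm hv)

section Cycle

variable {c : List (V × E)}

lemma IsCycle.neZero (hc : G.IsCycle c) : NeZero c.length := ⟨by have := hc.2.2.1; omega⟩

lemma IsCycle.ends_get [NeZero c.length] (hc : G.IsCycle c) (i : Fin c.length) :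
    G.ends (c.get i).2 = s((c.get i).1, (c.get (i + 1)).1) := by
  have hsucc : (⟨(i + 1) % c.length, Nat.mod_lt _ i.pos⟩ : Fin c.length) = i + 1 := by
    ext
    rw [Fin.val_add, Fin.val_one', Nat.add_mod_mod]
  rw [hc.2.2.2 i, hsucc]

lemma IsCycle.injective_get_snd (hc : G.IsCycle c) : Function.Injective fun i => (c.get i).2 := by
  intro i j h
  exact Fin.ext ((hc.2.1.getElem_inj_iff (hi := by simp) (hj := by simp)).mp (by simpa using h))

lemma IsCycle.fst_mem_ends (hc : G.IsCycle c) {p : V × E} (hp : p ∈ c) : p.1 ∈ G.ends p.2 := by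
  have := hc.neZero
  obtain ⟨i, rfl⟩ := List.mem_iff_get.mp hp
  rw [hc.ends_get i]
  exact Sym2.mem_mk_left _ _

lemma IsCycle.exists_mem_ends_ne (hc : G.IsCycle c) {p : V × E} (hp : p ∈ c) {u : V}
    (hu : u ∈ G.ends p.2) : ∃ q ∈ c, q.2 ≠ p.2 ∧ u ∈ G.ends q.2 := by
  have := hc.neZero
  have hone : (1 : Fin c.length) ≠ 0 := by
    rw [Ne, Fin.ext_iff, Fin.val_one', Fin.val_zero, Nat.mod_eq_of_lt (by have := hc.2.2.1; omega)]
    exact one_ne_zero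
  obtain ⟨k, rfl⟩ := List.mem_iff_get.mp hp
  have hne : ∀ j, j ≠ k → (c.get j).2 ≠ (c.get k).2 := fun j hjk h => hjk (hc.injective_get_snd h)
  rw [hc.ends_get, Sym2.mem_iff] at hu
  rcases hu with rfl | rfl
  · refine ⟨c.get (k - 1), List.get_mem _ _, hne _ (by simpa using hone), ?_⟩
    rw [hc.ends_get, sub_add_cancel]
    exact Sym2.mem_mk_right _ _
  · refine ⟨c.get (k + 1), List.get_mem _ _, hne _ (by simpa using hone), ?_⟩
    rw [hc.ends_get]
    exact Sym2.mem_mk_left _ _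

open Fin.NatCast in
lemma IsCycle.connOn_diff (hc : G.IsCycle c) {S : Set E} (hcS : ∀ p ∈ c, p.2 ∈ S)
    (hS : G.ConnOn S) {p : V × E} (hp : p ∈ c) : G.ConnOn (S \ {p.2}) := by
  have := hc.neZero
  obtain ⟨k, rfl⟩ := List.mem_iff_get.mp hp
  let v : Fin c.length → V := fun i => (c.get i).1
  -- go once around the cycle from `v (k + 1)` back to `v k`, avoiding only the `k`-th edge
  have walk : ∀ m : ℕ, m < c.length →
      ReflTransGen (G.AdjOn (S \ {(c.get k).2})) (v (k + 1)) (v (k + 1 + (m : Fin c.length))) := by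
    intro m
    induction m with
    | zero => intro; rw [Nat.cast_zero, add_zero]
    | succ m ih =>
      intro hm
      refine (ih (by omega)).tail
        ⟨(c.get (k + 1 + (m : Fin c.length))).2, ⟨hcS _ (List.get_mem _ _), ?_⟩, ?_⟩
      · intro h
        have h' := hc.injective_get_snd h
        rw [add_assoc, add_eq_left, ← Nat.cast_one, ← Nat.cast_add, Fin.natCast_eq_zero] at h'
        exact absurd (Nat.le_of_dvd (by omega) h') (by omega)
      · rw [hc.ends_get]
        push_cast
        rw [add_assoc (k + 1)]
  have hback : ReflTransGen (G.AdjOn (S \ {(c.get k).2})) (v (k + 1)) (v k) := by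
    have hlen := hc.2.2.1
    have h := walk (c.length - 1) (by omega)
    rwa [add_assoc, ← Nat.cast_one, ← Nat.cast_add, Nat.add_sub_cancel' (by omega),
      Fin.natCast_self, add_zero] at h
  refine ⟨hS.1, fun u w => ReflTransGen.lift' id (fun a b ⟨e, he, hab⟩ => ?_) u w (hS.2 u w)⟩
  by_cases hek : e = (c.get k).2
  · rw [hek, hc.ends_get, Sym2.eq_iff] at hab
    rcases hab with ⟨rfl, rfl⟩ | ⟨rfl, rfl⟩
    · exact reflTransGen_adjOn_symm hback
    · exact hback
  · exact ReflTransGen.single ⟨e, ⟨he, hek⟩, hab⟩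

lemma IsCycle.map {E' : Type} {G' : Multigraph V E'} (hc : G.IsCycle c)
    (f : E → E') (hf : Set.InjOn f {e | e ∈ c.map Prod.snd})
    (hends : ∀ p ∈ c, G'.ends (f p.2) = G.ends p.2) : G'.IsCycle (c.map (Prod.map id f)) := by
  obtain ⟨hfst, hsnd, hlen, hget⟩ := hc
  refine ⟨by rw [List.map_map]; exact hfst, ?_, by simpa using hlen, fun i => ?_⟩
  · have : (c.map (Prod.map id f)).map Prod.snd = (c.map Prod.snd).map f := by simp
    rw [this]
    exact hsnd.map_on fun x hx y hy h => hf hx hy h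
  · have hi : (i : ℕ) < c.length := by simpa using i.2
    simpa [hends _ (List.getElem_mem hi)] using hget ⟨i, hi⟩

end Cycle

section Degree

variable [Finite E]

lemma card_le_deg {v : V} (s : Finset E) (hs : ∀ e ∈ s, v ∈ G.ends e) : s.card ≤ G.deg v := by
  have := Nat.card_le_card_of_injective (fun e : s => (⟨e, hs e e.2⟩ : {e // v ∈ G.ends e}))
    fun a b h => Subtype.ext (congrArg Subtype.val h :)
  simpa [deg] using this

lemma mem_of_deg_le_card {v : V} (s : Finset E) (hs : ∀ e ∈ s, v ∈ G.ends e)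
    (hdeg : G.deg v ≤ s.card) {g : E} (hg : v ∈ G.ends g) : g ∈ s := by
  classical
  by_contra hgs
  have := card_le_deg (insert g s) fun e he => (Finset.mem_insert.mp he).elim (· ▸ hg) (hs e)
  rw [Finset.card_insert_of_notMem hgs] at this
  omega

lemma exists_forall_eq_or_eq_of_deg_le_two {v : V} {e : E} (he : v ∈ G.ends e)
    (hdeg : G.deg v ≤ 2) : ∃ f, ∀ g, v ∈ G.ends g → g = e ∨ g = f := by
  classical
  by_cases h : ∃ f ≠ e, v ∈ G.ends f
  · obtain ⟨f, hfe, hf⟩ := h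
    refine ⟨f, fun g hg => ?_⟩
    simpa using mem_of_deg_le_card {e, f} (by simp [he, hf]) (by rwa [Finset.card_pair hfe.symm]) hg
  · push Not at h
    exact ⟨e, fun g hg => Or.inl (by_contra fun hge => h g hge hg)⟩

lemma eq_or_eq_or_eq_of_deg_le_three {v : V} {e₁ e₂ e₃ : E} (h₁ : v ∈ G.ends e₁)
    (h₂ : v ∈ G.ends e₂) (h₃ : v ∈ G.ends e₃) (h₁₂ : e₁ ≠ e₂) (h₁₃ : e₁ ≠ e₃) (h₂₃ : e₂ ≠ e₃)
    (hdeg : G.deg v ≤ 3) {g : E} (hg : v ∈ G.ends g) : g = e₁ ∨ g = e₂ ∨ g = e₃ := by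
  classical
  have hs : ∀ e ∈ ({e₁, e₂, e₃} : Finset E), v ∈ G.ends e := by
    simp only [Finset.mem_insert, Finset.mem_singleton]
    rintro _ (rfl | rfl | rfl) <;> assumption
  have hcard : G.deg v ≤ ({e₁, e₂, e₃} : Finset E).card := by
    rwa [Finset.card_insert_of_notMem (by simp [h₁₂, h₁₃]), Finset.card_pair h₂₃]
  simpa using mem_of_deg_le_card _ hs hcard hg

end Degree

section DeleteEdge

def deleteEdge (G : Multigraph V E) (d : E) : Multigraph V {e // e ≠ d} :=
  ⟨fun e => G.ends e, fun e => G.loopless e⟩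

variable {d : E}

@[simp]
lemma deleteEdge_ends (e : {e // e ≠ d}) : (G.deleteEdge d).ends e = G.ends e := rfl

lemma deg_deleteEdge_le [Finite E] (v : V) : (G.deleteEdge d).deg v ≤ G.deg v :=
  Nat.card_le_card_of_injective (fun e => ⟨e.1.1, e.2⟩)
    fun _ _ h => Subtype.ext (Subtype.ext (congrArg Subtype.val h :))

lemma connected_deleteEdge {d' : E} (hd : d' ≠ d) (hends : G.ends d' = G.ends d)
    (hG : G.Connected) : (G.deleteEdge d).Connected := by
  refine ⟨hG.1, fun u v => ReflTransGen.mono (fun _ _ ⟨e, _, hab⟩ => ?_) u v (hG.2 u v)⟩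
  by_cases he : e = d
  · exact ⟨⟨d', hd⟩, trivial, by rw [deleteEdge_ends, hends, ← he, hab]⟩
  · exact ⟨⟨e, he⟩, trivial, hab⟩

lemma IsTreeSet.image_val {T : Set {e // e ≠ d}} (hT : (G.deleteEdge d).IsTreeSet T) :
    G.IsTreeSet (Subtype.val '' T) := by
  obtain ⟨⟨hne, hconn⟩, hacyc⟩ := hT
  refine ⟨⟨hne, fun u v => ReflTransGen.mono (fun a b ⟨e, he, hab⟩ => ⟨e.1, ⟨e, he, rfl⟩, hab⟩)
    u v (hconn u v)⟩, ?_⟩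
  rintro ⟨c, hc, hcT⟩
  obtain ⟨p, hp⟩ := List.exists_mem_of_length_pos (by have := hc.2.2.1; omega : 0 < c.length)
  have : Nonempty {e // e ≠ d} := by obtain ⟨t, -, -⟩ := hcT p hp; exact ⟨t⟩
  let φ := Function.invFun (Subtype.val : {e // e ≠ d} → E)
  have hφ : ∀ q ∈ c, (φ q.2).1 = q.2 ∧ φ q.2 ∈ T := by
    intro q hq
    obtain ⟨t, ht, htq⟩ := hcT q hq
    have : φ t.1 = t := Function.leftInverse_invFun Subtype.val_injective t
    rw [← htq, this]
    exact ⟨rfl, ht⟩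
  refine hacyc ⟨c.map (Prod.map id φ), hc.map φ ?_ fun q hq => ?_, ?_⟩
  · rintro e he e' he' h
    obtain ⟨q, hq, rfl⟩ := List.mem_map.mp he
    obtain ⟨q', hq', rfl⟩ := List.mem_map.mp he'
    rw [← (hφ q hq).1, ← (hφ q' hq').1, h]
  · rw [deleteEdge_ends, (hφ q hq).1]
  · simp only [List.mem_map, Prod.exists]
    rintro _ ⟨u, e, he, rfl⟩
    exact (hφ _ he).2

lemma hasTM_of_deleteEdge {T M : Set {e // e ≠ d}} (hTM : T ∪ M = Set.univ) (hdisj : Disjoint T M)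
    (hT : (G.deleteEdge d).IsTreeSet T) (hM : (G.deleteEdge d).IsMatchingSet M)
    (hd : ∀ m ∈ M, ∀ u ∈ G.ends d, u ∉ G.ends m.1) : G.HasTM := by
  refine ⟨Subtype.val '' T, insert d (Subtype.val '' M), ?_, ?_, hT.image_val, ?_⟩
  · refine Set.eq_univ_of_forall fun e => ?_
    by_cases he : e = d
    · exact Or.inr (Or.inl he)
    · rcases hTM.symm ▸ Set.mem_univ (⟨e, he⟩ : {e // e ≠ d}) with h | h
      exacts [Or.inl ⟨_, h, rfl⟩, Or.inr (Or.inr ⟨_, h, rfl⟩)]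
  · rw [Set.disjoint_left]
    rintro _ ⟨t, ht, rfl⟩ (h | ⟨m, hm, hmt⟩)
    · exact t.2 h
    · exact Set.disjoint_left.mp hdisj ht (Subtype.ext hmt ▸ hm)
  · rintro _ (rfl | ⟨m, hm, rfl⟩) _ (rfl | ⟨m', hm', rfl⟩) hne u ⟨hu, hu'⟩
    · exact hne rfl
    · exact hd m' hm' u hu hu'
    · exact hd m hm u hu' hu
    · exact hM m hm m' hm' (fun h => hne (congrArg Subtype.val h)) u ⟨hu, hu'⟩

end DeleteEdge

def IsPendantDigon (G : Multigraph V E) (w : V) (d₁ d₂ : E) : Prop :=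
  d₁ ≠ d₂ ∧ G.ends d₁ = G.ends d₂ ∧ ∀ g, w ∈ G.ends g ↔ g = d₁ ∨ g = d₂

/-- In `G - d₂` the edge `d₁` is pendant, hence in the tree; its other end, of degree at most 3,
meets no matching edge, since otherwise `d₁` would be the only tree edge at both of its ends.
Hence `d₂` can join the matching. -/
lemma IsPendantDigon.hasTM_of_deleteEdge [Finite E] {w : V} {d₁ d₂ : E}
    (hd : G.IsPendantDigon w d₁ d₂) (hdeg : ∀ v, G.deg v ≤ 3) (h : (G.deleteEdge d₂).HasTM) :
    G.HasTM := by
  obtain ⟨T, M, hTM, hdisj, hT, hM⟩ := h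
  obtain ⟨hd₁₂, hends, hw⟩ := hd
  obtain ⟨a, ha⟩ := Sym2.mem_iff_exists.mp ((hw d₁).2 (Or.inl rfl))
  let d₁' : {e // e ≠ d₂} := ⟨d₁, hd₁₂⟩
  have hw' : ∀ g : {e // e ≠ d₂}, w ∈ G.ends g.1 → g = d₁' :=
    fun g hg => Subtype.ext (((hw g).1 hg).resolve_right g.2)
  have hd₁T : d₁' ∈ T := by
    obtain ⟨g, hgT, hwg⟩ := hT.1.exists_mem_of_ne (ne_of_ends_eq ha)
    rwa [hw' g hwg] at hgT
  refine Multigraph.hasTM_of_deleteEdge hTM hdisj hT hM fun m hmM u hu hum => ?_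
  have hmd₁ : m ≠ d₁' := fun h => Set.disjoint_left.mp hdisj hd₁T (h ▸ hmM)
  rw [← hends, ha, Sym2.mem_iff] at hu
  obtain hu | hu := hu
  · exact hmd₁ (hw' m (hu ▸ hum))
  subst hu
  have hd₁u : u ∈ G.ends d₁ := ha ▸ Sym2.mem_mk_right _ _
  have hu' : ∀ f ∈ T, u ∈ G.ends f.1 → f = d₁' := fun f hf huf => by
    rcases eq_or_eq_or_eq_of_deg_le_three hd₁u (hends ▸ hd₁u) hum hd₁₂
      (fun h => hmd₁ (Subtype.ext h.symm)) (Ne.symm m.2) (hdeg u) huf with h | h | h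
    · exact Subtype.ext h
    · exact absurd h f.2
    · exact absurd (Subtype.ext h ▸ hf) (Set.disjoint_left.mp hdisj · hmM)
  obtain ⟨b, hb⟩ := Sym2.mem_iff_exists.mp hum
  rcases hT.1.eq_or_eq_of_leaf_edge hd₁T ha (fun f _ hf => hw' f hf) hu' b with rfl | rfl
  · exact hmd₁ (hw' m (hb ▸ Sym2.mem_mk_right _ _))
  · exact ne_of_ends_eq hb rfl

/-- For an edge set `T`, a choice for every edge `i ∉ T` of an end `w i` at which the only other
edge is `f i ∈ T`; `x i` and `y i` are the far ends of `i` and of `f i`. -/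
structure Pendants (G : Multigraph V E) (T : Set E) where
  w : {e // e ∉ T} → V
  x : {e // e ∉ T} → V
  y : {e // e ∉ T} → V
  f : {e // e ∉ T} → E
  ends_eq : ∀ i : {e // e ∉ T}, G.ends i = s(w i, x i)
  ends_f : ∀ i, G.ends (f i) = s(w i, y i)
  f_mem : ∀ i, f i ∈ T
  eq_or_eq : ∀ (i : {e // e ∉ T}) g, w i ∈ G.ends g → g = i ∨ g = f i
  x_ne_y : ∀ i, x i ≠ y i

lemma exists_pendants [Finite E] {T : Set E} (hT : G.ConnOn T) (hdeg : ∀ v, G.deg v ≤ 3)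
    (hT3 : ∀ e ∉ T, ∃ u ∈ G.ends e, G.deg u ≠ 3)
    (hdig : ∀ w d₁ d₂, ¬ G.IsPendantDigon w d₁ d₂) : Nonempty (G.Pendants T) := by
  have key : ∀ i : {e // e ∉ T}, ∃ w x y f, G.ends i = s(w, x) ∧ G.ends f = s(w, y) ∧ f ∈ T ∧
      (∀ g, w ∈ G.ends g → g = i ∨ g = f) ∧ x ≠ y := by
    intro i
    obtain ⟨w, hw, hw3⟩ := hT3 i i.2
    obtain ⟨f, hf⟩ := exists_forall_eq_or_eq_of_deg_le_two hw (by have := hdeg w; omega)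
    obtain ⟨x, hx⟩ := Sym2.mem_iff_exists.mp hw
    obtain ⟨g, hgT, hwg⟩ := hT.exists_mem_of_ne (ne_of_ends_eq hx)
    obtain rfl : g = f := (hf g hwg).resolve_left fun h => i.2 (h ▸ hgT)
    obtain ⟨y, hy⟩ := Sym2.mem_iff_exists.mp hwg
    refine ⟨w, x, y, g, hx, hy, hgT, hf, ?_⟩
    rintro rfl
    refine hdig w i g ⟨fun h => i.2 (h ▸ hgT), hx.trans hy.symm, fun e => ⟨hf e, ?_⟩⟩
    rintro (rfl | rfl)
    exacts [hw, hwg]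
  choose w x y f hx hy hf heq hxy using key
  exact ⟨⟨w, x, y, f, hx, hy, hf, heq, hxy⟩⟩

namespace Pendants

variable {T : Set E} (P : G.Pendants T)

lemma w_mem_ends (i : {e // e ∉ T}) : P.w i ∈ G.ends i := P.ends_eq i ▸ Sym2.mem_mk_left _ _

lemma eq_f_of_mem {i : {e // e ∉ T}} {g : E} (hg : g ∈ T) (hw : P.w i ∈ G.ends g) : g = P.f i :=
  (P.eq_or_eq i g hw).resolve_left fun h => i.2 (h ▸ hg)

lemma w_injective : Function.Injective P.w := fun i j h =>
  (Subtype.ext ((P.eq_or_eq i j (h ▸ P.w_mem_ends j)).resolve_right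
    fun h' => j.2 (h' ▸ P.f_mem i))).symm

lemma x_ne_w (i j : {e // e ∉ T}) : P.x i ≠ P.w j := by
  intro h
  rcases P.eq_or_eq j i (by rw [P.ends_eq, h]; exact Sym2.mem_mk_right _ _) with h' | h'
  · obtain rfl := Subtype.ext h'
    exact ne_of_ends_eq (P.ends_eq i) h.symm
  · exact i.2 (h' ▸ P.f_mem j)

/-- Otherwise `f i` would join the two leaves `w i` and `w j` of the connected `T`. -/
lemma y_ne_w (hT : G.ConnOn T) (i j : {e // e ∉ T}) : P.y i ≠ P.w j := by
  intro h
  have hfj : P.f i = P.f j :=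
    P.eq_f_of_mem (P.f_mem i) (by rw [P.ends_f, h]; exact Sym2.mem_mk_right _ _)
  rcases hT.eq_or_eq_of_leaf_edge (P.f_mem i) (P.ends_f i) (fun g hg => P.eq_f_of_mem hg)
    (fun g hg hyg => hfj ▸ P.eq_f_of_mem hg (h ▸ hyg)) (P.x i) with hx | hx
  · exact ne_of_ends_eq (P.ends_eq i) hx.symm
  · exact P.x_ne_y i hx

variable [DecidableEq V]

def edgeTo (i : {e // e ∉ T}) (z : V) : E := if z = P.x i then i else P.f i

lemma ends_edgeTo {i : {e // e ∉ T}} {z : V} (hz : z = P.x i ∨ z = P.y i) :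
    G.ends (P.edgeTo i z) = s(P.w i, z) := by
  unfold edgeTo
  split_ifs with h
  · rw [P.ends_eq, h]
  · rw [P.ends_f, hz.resolve_left h]

/-- No vertex `z` lies on three of the pairs `{x i, y i}`: its three edges would then all lead
to leaves `w i`, so that `T` could not reach the far end of the pair through `z`. -/
lemma not_three_mem (hT : G.ConnOn T) [Finite E] (hdeg : ∀ v, G.deg v ≤ 3) {z : V}
    {i₁ i₂ i₃ : {e // e ∉ T}} (h₁₂ : i₁ ≠ i₂) (h₁₃ : i₁ ≠ i₃) (h₂₃ : i₂ ≠ i₃)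
    (hz₁ : z = P.x i₁ ∨ z = P.y i₁) (hz₂ : z = P.x i₂ ∨ z = P.y i₂)
    (hz₃ : z = P.x i₃ ∨ z = P.y i₃) : False := by
  have hends : ∀ {i}, z = P.x i ∨ z = P.y i → G.ends (P.edgeTo i z) = s(z, P.w i) :=
    fun hz => by rw [P.ends_edgeTo hz, Sym2.eq_swap]
  have hmem : ∀ {i}, z = P.x i ∨ z = P.y i → z ∈ G.ends (P.edgeTo i z) :=
    fun hz => hends hz ▸ Sym2.mem_mk_left _ _
  have hne : ∀ {i j}, z = P.x i ∨ z = P.y i → z = P.x j ∨ z = P.y j → i ≠ j →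
      P.edgeTo i z ≠ P.edgeTo j z := fun hi hj hij h =>
    hij (P.w_injective (by rw [← Sym2.congr_right, ← hends hi, ← hends hj, h]))
  have hnbr : ∀ g, z ∈ G.ends g → ∃ i, G.ends g = s(z, P.w i) := fun g hg => by
    rcases eq_or_eq_or_eq_of_deg_le_three (hmem hz₁) (hmem hz₂) (hmem hz₃) (hne hz₁ hz₂ h₁₂)
      (hne hz₁ hz₃ h₁₃) (hne hz₂ hz₃ h₂₃) (hdeg z) hg with rfl | rfl | rfl
    exacts [⟨i₁, hends hz₁⟩, ⟨i₂, hends hz₂⟩, ⟨i₃, hends hz₃⟩]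
  have hstar := hT.eq_or_adjOn_of_leaves fun e he u hu g hg hug => by
    obtain ⟨i, hi⟩ := hnbr e (hu ▸ Sym2.mem_mk_left _ _)
    rw [hu, Sym2.congr_right] at hi
    subst hi
    rw [P.eq_f_of_mem hg hug, P.eq_f_of_mem he (hu ▸ Sym2.mem_mk_right _ _)]
  rcases hz₁ with hx | hy
  · rcases hstar (P.w i₁) with h | ⟨g, hg, hgw⟩
    · exact P.x_ne_w i₁ i₁ (h.trans hx).symm
    · rw [P.eq_f_of_mem hg (hgw ▸ Sym2.mem_mk_right _ _), P.ends_f, Sym2.eq_swap,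
        Sym2.congr_left] at hgw
      exact P.x_ne_y i₁ (hx ▸ hgw).symm
  · rcases hstar (P.x i₁) with h | ⟨g, -, hgx⟩
    · exact P.x_ne_y i₁ (h.trans hy)
    · obtain ⟨i, hi⟩ := hnbr g (hgx ▸ Sym2.mem_mk_left _ _)
      rw [hgx, Sym2.congr_right] at hi
      exact P.x_ne_w i₁ i hi

lemma card_filter_mem_le_two (hT : G.ConnOn T) [Finite E] (hdeg : ∀ v, G.deg v ≤ 3)
    [Fintype {e // e ∉ T}] (z : V) :
    (Finset.univ.filter fun i => z ∈ ({P.x i, P.y i} : Finset V)).card ≤ 2 := by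
  by_contra h
  obtain ⟨i₁, hi₁, i₂, hi₂, i₃, hi₃, h₁₂, h₁₃, h₂₃⟩ := Finset.two_lt_card.mp (not_le.mp h)
  have hmem : ∀ i ∈ Finset.univ.filter fun i => z ∈ ({P.x i, P.y i} : Finset V),
      z = P.x i ∨ z = P.y i := fun i hi => by simpa using hi
  exact P.not_three_mem hT hdeg h₁₂ h₁₃ h₂₃ (hmem _ hi₁) (hmem _ hi₂) (hmem _ hi₃)

section Matching

variable (σ : {e // e ∉ T} → V)

def matching : Set E := Set.range fun i => P.edgeTo i (σ i)

lemma coe_mem_matching_iff (i : {e // e ∉ T}) : (i : E) ∈ P.matching σ ↔ σ i = P.x i := by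
  constructor
  · rintro ⟨j, hj⟩
    simp only [edgeTo] at hj
    split_ifs at hj with h
    · obtain rfl := Subtype.ext hj
      exact h
    · exact absurd (hj ▸ P.f_mem j) i.2
  · exact fun h => ⟨i, by simp [edgeTo, h]⟩

lemma f_mem_matching {i : {e // e ∉ T}} (h : σ i ≠ P.x i) : P.f i ∈ P.matching σ :=
  ⟨i, by simp [edgeTo, h]⟩

/-- A cycle avoiding the matching leaves `T` at some `i`, and then passes through `w i` along
its only other edge `f i`, which lies in the matching. -/
lemma not_exists_isCycle_compl_matching (hT : G.IsTreeSet T) :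
    ¬ ∃ c, G.IsCycle c ∧ ∀ p ∈ c, p.2 ∈ (P.matching σ)ᶜ := by
  rintro ⟨c, hc, hcM⟩
  refine hT.2 ⟨c, hc, fun p hp => ?_⟩
  by_contra hpT
  let i : {e // e ∉ T} := ⟨p.2, hpT⟩
  have hi : σ i ≠ P.x i := fun h => hcM p hp ((P.coe_mem_matching_iff σ i).mpr h)
  obtain ⟨q, hq, hqp, hwq⟩ := hc.exists_mem_ends_ne hp (P.w_mem_ends i)
  exact hcM q hq ((P.eq_or_eq i q.2 hwq).resolve_left hqp ▸ P.f_mem_matching σ hi)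

lemma isMatchingSet_matching (hT : G.ConnOn T) (hσ : Function.Injective σ)
    (hσxy : ∀ i, σ i = P.x i ∨ σ i = P.y i) :
    G.IsMatchingSet (P.matching σ) := by
  rintro _ ⟨i, rfl⟩ _ ⟨j, rfl⟩ hne v ⟨hvi, hvj⟩
  have hij : i ≠ j := fun h => hne (h ▸ rfl)
  have hσw : ∀ i j, σ i ≠ P.w j := fun i j =>
    (hσxy i).elim (fun h => h ▸ P.x_ne_w i j) fun h => h ▸ P.y_ne_w hT i j
  rw [P.ends_edgeTo (hσxy i), Sym2.mem_iff] at hvi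
  rw [P.ends_edgeTo (hσxy j), Sym2.mem_iff] at hvj
  rcases hvi with rfl | rfl <;> rcases hvj with h | h
  · exact hij (P.w_injective h)
  · exact hσw j i h.symm
  · exact hσw i j h
  · exact hij (hσ h)

/-- Swapping `f i` for `i` moves the leaf `w i` from `y i` to `x i`; collapsing each moved
leaf onto `y i` retracts `T` onto the complement of the matching. -/
lemma connOn_compl_matching (hT : G.ConnOn T) : G.ConnOn (P.matching σ)ᶜ := by
  classical
  let ρ : V → V := fun u => if h : ∃ i, σ i ≠ P.x i ∧ P.w i = u then P.y h.choose else u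
  have hρw : ∀ i, σ i ≠ P.x i → ρ (P.w i) = P.y i := fun i hi => by
    have h : ∃ j, σ j ≠ P.x j ∧ P.w j = P.w i := ⟨i, hi, rfl⟩
    simp only [ρ, dif_pos h, P.w_injective h.choose_spec.2]
  have hρ : ∀ u, (∀ i, σ i ≠ P.x i → P.w i ≠ u) → ρ u = u := fun u hu =>
    dif_neg (by rintro ⟨i, hi, h⟩; exact hu i hi h)
  refine hT.of_retraction ρ (fun e he a b hab => ?_) fun u => ?_
  · by_cases heM : e ∈ P.matching σ
    · obtain ⟨i, rfl⟩ := heM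
      have hi : σ i ≠ P.x i := fun h => i.2 (by simpa [edgeTo, h] using he)
      simp only [edgeTo, if_neg hi, P.ends_f, Sym2.eq_iff] at hab
      have hρy : ρ (P.y i) = P.y i := hρ _ fun j _ h => P.y_ne_w hT i j h.symm
      rcases hab with ⟨rfl, rfl⟩ | ⟨rfl, rfl⟩ <;> rw [hρw i hi, hρy]
    · have hfix : ∀ u ∈ G.ends e, ρ u = u := fun u hu => hρ u fun i hi h =>
        heM (P.eq_f_of_mem he (h ▸ hu) ▸ P.f_mem_matching σ hi)
      rw [hfix a (hab ▸ Sym2.mem_mk_left _ _), hfix b (hab ▸ Sym2.mem_mk_right _ _)]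
      exact .single ⟨e, heM, hab⟩
  · by_cases h : ∃ i, σ i ≠ P.x i ∧ P.w i = u
    · obtain ⟨i, hi, rfl⟩ := h
      refine ⟨P.x i, .single ⟨i, fun h => hi ((P.coe_mem_matching_iff σ i).mp h), ?_⟩⟩
      rw [hρ _ fun j _ h => P.x_ne_w i j h.symm, P.ends_eq]
    · push Not at h
      exact ⟨u, by rw [hρ u h]⟩

lemma hasTM (hT : G.IsTreeSet T) (hσ : Function.Injective σ)
    (hσxy : ∀ i, σ i = P.x i ∨ σ i = P.y i) : G.HasTM :=
  ⟨(P.matching σ)ᶜ, P.matching σ, Set.compl_union_self _, disjoint_compl_left,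
    ⟨P.connOn_compl_matching σ hT.1, P.not_exists_isCycle_compl_matching σ hT⟩,
    P.isMatchingSet_matching σ hT.1 hσ hσxy⟩

end Matching

end Pendants

lemma IsCycle.mem_of_minimal {F T : Set E} (hT : Minimal (fun S => F ⊆ S ∧ G.ConnOn S) T)
    {c : List (V × E)} (hc : G.IsCycle c) (hcT : ∀ p ∈ c, p.2 ∈ T) {p : V × E} (hp : p ∈ c) :
    p.2 ∈ F := by
  by_contra hpF
  have hsub := hT.2 (y := T \ {p.2})
    ⟨fun e he => ⟨hT.1.1 he, fun h => hpF (h ▸ he)⟩, hc.connOn_diff hcT hT.1.2 hp⟩ Set.sdiff_subset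
  exact (hsub (hcT p hp)).2 rfl

theorem hasTM_of_forall_not_isPendantDigon [Finite E] (hconn : G.Connected)
    (hdeg : ∀ v, G.deg v ≤ 3) (hcyc : ∀ c, G.IsCycle c → ∃ p ∈ c, G.deg p.1 ≠ 3)
    (hdig : ∀ w d₁ d₂, ¬ G.IsPendantDigon w d₁ d₂) : G.HasTM := by
  classical
  obtain ⟨T, -, hT⟩ := Finite.exists_le_minimal
    (p := fun S => {e | ∀ u ∈ G.ends e, G.deg u = 3} ⊆ S ∧ G.ConnOn S) (a := Set.univ)
    ⟨Set.subset_univ _, hconn⟩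
  have htree : G.IsTreeSet T := ⟨hT.1.2, fun ⟨c, hc, hcT⟩ => by
    obtain ⟨p, hp, h3⟩ := hcyc c hc
    exact h3 (hc.mem_of_minimal hT hcT hp p.1 (hc.fst_mem_ends hp))⟩
  obtain ⟨P⟩ := exists_pendants hT.1.2 hdeg
    (fun e he => by by_contra! h; exact he (hT.1.1 h)) hdig
  have := Fintype.ofFinite {e // e ∉ T}
  obtain ⟨σ, hσ, hσt⟩ := Finset.exists_injective_of_le_card_of_card_filter_le
    (fun i => {P.x i, P.y i}) two_pos (fun i => (Finset.card_pair (P.x_ne_y i)).ge)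
    (P.card_filter_mem_le_two hT.1.2 hdeg)
  exact P.hasTM σ htree hσ fun i => by simpa using hσt i

theorem hasTM_of_forall_isCycle_exists_deg_ne_three [Finite E] (hconn : G.Connected)
    (hdeg : ∀ v, G.deg v ≤ 3) (hcyc : ∀ c, G.IsCycle c → ∃ p ∈ c, G.deg p.1 ≠ 3) :
    G.HasTM := by
  induction h : Nat.card E using Nat.strong_induction_on generalizing E with
  | _ n ih =>
  by_cases hdig : ∃ w d₁ d₂, G.IsPendantDigon w d₁ d₂
  · obtain ⟨w, d₁, d₂, hd⟩ := hdig
    refine hd.hasTM_of_deleteEdge hdeg (ih _ ?_ (G := G.deleteEdge d₂)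
      (connected_deleteEdge hd.1 hd.2.1 hconn) (fun v => (deg_deleteEdge_le v).trans (hdeg v))
      ?_ rfl)
    · exact h ▸ Finite.card_subtype_lt (p := (· ≠ d₂)) (x := d₂) (by simp)
    · intro c hc
      obtain ⟨p, hp, hp3⟩ := hcyc _ (hc.map Subtype.val Subtype.val_injective.injOn fun _ _ => rfl)
      obtain ⟨q, hq, rfl⟩ := List.mem_map.mp hp
      exact ⟨q, hq, fun h3 => hp3 (le_antisymm (hdeg _) (h3 ▸ deg_deleteEdge_le _))⟩
  · push Not at hdig
    exact hasTM_of_forall_not_isPendantDigon hconn hdeg hcyc hdig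

end Multigraph

open Multigraph in
theorem stmt_16_general {V E : Type} [Finite E] (G : Multigraph V E)
    (hG : G.MinCex) :
    ∃ c : List (V × E), G.IsCycle c ∧ ∀ p ∈ c, G.deg p.1 = 3 := by
  by_contra! h
  exact hG.2.1 (hasTM_of_forall_isCycle_exists_deg_ne_three hG.1.1 (fun v => (hG.1.2.1 v).2) h)

open Multigraph in
/-- A minimum counterexample in `S_{1,3}` to the
2-Decomposition Conjecture contains a cycle all of whose vertices have
degree 3. -/
theorem stmt_16 {V E : Type} [Finite V] [Finite E] (G : Multigraph V E)
    (hG : G.MinCex) :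
    ∃ c : List (V × E), G.IsCycle c ∧ ∀ p ∈ c, G.deg p.1 = 3 :=
  stmt_16_general G hG
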